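/- Let H₀ ∈ ℝ and let f : ℝ → ℝ be twice differentiable on (0,∞). Then (1/2)(f'(u)/u + f''(u)) = H₀ for all u > 0 if and only if there exist constants c₁, c₂ ∈ ℝ such that f(u) = (H₀/2)u² + c₁ ln u + c₂ for all u > 0. -/

import Mathlib

/-!
The mean curvature operator is `(1 / 2u) (u f')'`, so `H = H₀` says `(u f')' = (H₀ u²)'`.
Integrating once on the connected set `(0,∞)` gives `f' = H₀ u + c₁ / u`, and integrating
again gives `f = H₀ u² / 2 + c₁ log u + c₂`. Conversely, the mean curvature only depends on
`f` near each point, so it can be computed on the explicit profile.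
-/

open Set

lemma hasDerivAt_quadratic_add_log (a c₁ c₂ : ℝ) {u : ℝ} (hu : u ≠ 0) :
    HasDerivAt (fun v => a / 2 * v ^ 2 + c₁ * Real.log v + c₂) (a * u + c₁ / u) u := by
  refine ((((hasDerivAt_pow 2 u).const_mul (a / 2)).add
    ((Real.hasDerivAt_log hu).const_mul c₁)).add_const c₂).congr_deriv ?_
  field_simp
  ring

lemma hasDerivAt_linear_add_inv (a c : ℝ) {u : ℝ} (hu : u ≠ 0) :
    HasDerivAt (fun v => a * v + c / v) (a - c / u ^ 2) u := by
  refine (((hasDerivAt_id u).const_mul a).add ((hasDerivAt_inv hu).const_mul c)).congr_deriv ?_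
  field_simp
  ring

lemma exists_eq_of_div_add_deriv_eq {g : ℝ → ℝ} {a : ℝ}
    (hg : ∀ u ∈ Ioi (0 : ℝ), DifferentiableAt ℝ g u)
    (h : ∀ u ∈ Ioi (0 : ℝ), g u / u + deriv g u = 2 * a) :
    ∃ c : ℝ, ∀ u ∈ Ioi (0 : ℝ), g u = a * u + c / u := by
  have hug : ∀ u ∈ Ioi (0 : ℝ), HasDerivAt (fun v => v * g v) (2 * a * u) u := by
    intro u hu
    have hu0 : u ≠ 0 := hu.ne'
    refine ((hasDerivAt_id u).mul (hg u hu).hasDerivAt).congr_deriv ?_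
    rw [← h u hu]
    field_simp
    simp only [id, mul_comm]
  have hau : ∀ u : ℝ, HasDerivAt (fun v => a * v ^ 2) (2 * a * u) u := fun u => by
    refine ((hasDerivAt_pow 2 u).const_mul a).congr_deriv ?_
    ring
  obtain ⟨c, hc⟩ := isOpen_Ioi.exists_eq_add_of_deriv_eq isPreconnected_Ioi
    (fun u hu => (hug u hu).differentiableAt.differentiableWithinAt)
    (fun u _ => (hau u).differentiableAt.differentiableWithinAt)
    (fun u hu => (hug u hu).deriv.trans (hau u).deriv.symm)
  refine ⟨c, fun u hu => ?_⟩
  have hu0 : u ≠ 0 := hu.ne'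
  have hcu : u * g u = a * u ^ 2 + c := hc hu
  field_simp
  linear_combination hcu

theorem surface_of_revolution_constant_H
    (H₀ : ℝ) (f : ℝ → ℝ)
    (hf : ∀ u ∈ Set.Ioi (0 : ℝ), DifferentiableAt ℝ f u)
    (hf' : ∀ u ∈ Set.Ioi (0 : ℝ), DifferentiableAt ℝ (deriv f) u) :
    (∀ u ∈ Set.Ioi (0 : ℝ), (1 / 2) * (deriv f u / u + deriv (deriv f) u) = H₀) ↔
    (∃ c₁ c₂ : ℝ, ∀ u ∈ Set.Ioi (0 : ℝ),
      f u = H₀ / 2 * u ^ 2 + c₁ * Real.log u + c₂) := by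
  constructor
  · intro hH
    obtain ⟨c₁, hc₁⟩ := exists_eq_of_div_add_deriv_eq (a := H₀) hf' fun u hu => by
      rw [← hH u hu]; ring
    have hP (u : ℝ) (hu : u ∈ Ioi (0 : ℝ)) := hasDerivAt_quadratic_add_log H₀ c₁ 0 hu.ne'
    obtain ⟨c₂, hc₂⟩ := isOpen_Ioi.exists_eq_add_of_deriv_eq isPreconnected_Ioi
      (fun u hu => (hf u hu).differentiableWithinAt)
      (fun u hu => (hP u hu).differentiableAt.differentiableWithinAt)
      (fun u hu => (hc₁ u hu).trans (hP u hu).deriv.symm)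
    exact ⟨c₁, c₂, fun u hu => by simpa using hc₂ hu⟩
  · rintro ⟨c₁, c₂, hF⟩ u hu
    have hf₁ : EqOn (deriv f) (fun v => H₀ * v + c₁ / v) (Ioi 0) := fun v hv =>
      ((show EqOn f _ (Ioi 0) from hF).deriv isOpen_Ioi hv).trans
        (hasDerivAt_quadratic_add_log H₀ c₁ c₂ hv.ne').deriv
    have hf₂ : deriv (deriv f) u = H₀ - c₁ / u ^ 2 :=
      (hf₁.deriv isOpen_Ioi hu).trans (hasDerivAt_linear_add_inv H₀ c₁ hu.ne').deriv
    have hu0 : u ≠ 0 := hu.ne'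
    rw [hf₁ hu, hf₂]
    field_simp
    ring
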